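/- For every LP^MLN program 𝔽 over 𝒫, every interpretation X, and every real number a, the evaluation at a of W_𝔽(X) divided by the sum over all interpretations Y ⊆ 𝒫 of the evaluation at a of W_𝔽(Y) equals the evaluation at a of W^pnt_𝔽(X) divided by the sum over all interpretations Y ⊆ 𝒫 of the evaluation at a of W^pnt_𝔽(Y); consequently P_𝔽(X) = P^pnt_𝔽(X). -/

import Mathlib

namespace LPMLN

/-- Propositional formulas over a set of atoms `P`, built from atoms and `⊥`
using `∧`, `∨`, `→`. -/
inductive Formula (P : Type) : Type where
  | atom : P → Formula P
  | bot  : Formula P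
  | and  : Formula P → Formula P → Formula P
  | or   : Formula P → Formula P → Formula P
  | imp  : Formula P → Formula P → Formula P
deriving DecidableEq

variable {P : Type} [DecidableEq P]

/-- `¬F` abbreviates `F → ⊥`. -/
def Formula.neg (F : Formula P) : Formula P := .imp F .bot

/-- Classical evaluation of a formula in an interpretation `X ⊆ P`. -/
def Formula.eval (X : Finset P) : Formula P → Bool
  | .atom p => decide (p ∈ X)
  | .bot => false
  | .and F G => F.eval X && G.eval X
  | .or F G => F.eval X || G.eval X
  | .imp F G => !(F.eval X) || G.eval X

/-- Classical satisfaction `X ⊨ F`. -/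
def Formula.sat (X : Finset P) (F : Formula P) : Prop := F.eval X = true

/-- The reduct `F^X`: every maximal subformula not satisfied by `X` is replaced by `⊥`. -/
def Formula.reduct (X : Finset P) : Formula P → Formula P
  | .atom p => if p ∈ X then .atom p else .bot
  | .bot => .bot
  | .and F G => if (Formula.and F G).eval X then .and (F.reduct X) (G.reduct X) else .bot
  | .or F G => if (Formula.or F G).eval X then .or (F.reduct X) (G.reduct X) else .bot
  | .imp F G => if (Formula.imp F G).eval X then .imp (F.reduct X) (G.reduct X) else .bot

/-- `X` satisfies a (finite) set of formulas. -/
def satSet (X : Finset P) (Γ : Finset (Formula P)) : Prop := ∀ F ∈ Γ, F.sat X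

/-- The reduct `Γ^X` of a finite set of formulas. -/
def reductSet (X : Finset P) (Γ : Finset (Formula P)) : Finset (Formula P) :=
  Γ.image (Formula.reduct X)

/-- `X` is a stable model of `Γ` if `X ⊨ Γ^X` and no proper subset of `X` satisfies `Γ^X`. -/
def StableModel (Γ : Finset (Formula P)) (X : Finset P) : Prop :=
  satSet X (reductSet X Γ) ∧ ∀ Y, Y ⊂ X → ¬ satSet Y (reductSet X Γ)

/-- A weight is a real number (soft) or the symbol `α` (hard). -/
inductive Weight : Type where
  | soft : ℝ → Weight
  | hard : Weight

noncomputable instance : DecidableEq Weight := Classical.decEq _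

/-- An LP^MLN program: a finite set of weighted formulas `w : R`. -/
abbrev Program (P : Type) [DecidableEq P] := Finset (Weight × Formula P)

/-- `𝔽_X`: the weighted formulas of `𝔽` whose formula is satisfied by `X`. -/
noncomputable def progSat (𝔽 : Program P) (X : Finset P) : Program P :=
  𝔽.filter (fun r => r.2.eval X = true)

/-- `𝔽̄`: the formulas of `𝔽`, with weights dropped. -/
noncomputable def formulas (𝔽 : Program P) : Finset (Formula P) := 𝔽.image Prod.snd

/-- `X` is a soft stable model of `𝔽` (i.e. `X ∈ SM[𝔽]`) if `X` is a stable model of `𝔽̄_X`. -/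
def SoftStable (𝔽 : Program P) (X : Finset P) : Prop :=
  StableModel (formulas (progSat 𝔽 X)) X

/-- w-expressions: either zero or a formal expression `e^{c₁ + c₂·α}` with `c₁ : ℝ`, `c₂ : ℤ`. -/
inductive WExpr : Type where
  | zero : WExpr
  | exp : ℝ → ℤ → WExpr

/-- Multiplication of w-expressions: add exponents componentwise; zero is absorbing. -/
def WExpr.mul : WExpr → WExpr → WExpr
  | .zero, _ => .zero
  | _, .zero => .zero
  | .exp a b, .exp c d => .exp (a + c) (b + d)

/-- Inverse of a w-expression: negate both exponents. -/
def WExpr.inv : WExpr → WExpr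
  | .zero => .zero
  | .exp a b => .exp (-a) (-b)

/-- Evaluation of a w-expression at a real number `a`. -/
noncomputable def WExpr.eval (a : ℝ) : WExpr → ℝ
  | .zero => 0
  | .exp c₁ c₂ => Real.exp (c₁ + c₂ * a)

/-- The real contribution of a weight (hard rules contribute `0` to the soft sum). -/
def softWeight : Weight → ℝ
  | .soft r => r
  | .hard => 0

/-- Sum of the weights of the soft rules of `𝔽`. -/
noncomputable def softSum (𝔽 : Program P) : ℝ := ∑ r ∈ 𝔽, softWeight r.1

/-- The number of hard rules of `𝔽`. -/
noncomputable def hardCount (𝔽 : Program P) : ℤ :=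
  ((𝔽.filter (fun r => r.1 = Weight.hard)).card : ℤ)

/-- `TW(𝔽) = e^{c₁ + c₂·α}` where `c₁` is the sum of the soft weights and
`c₂` the number of hard rules. -/
noncomputable def TW (𝔽 : Program P) : WExpr := .exp (softSum 𝔽) (hardCount 𝔽)

open Classical in
/-- `W_𝔽(X) = TW(𝔽_X)` if `X ∈ SM[𝔽]`, and zero otherwise. -/
noncomputable def W (𝔽 : Program P) (X : Finset P) : WExpr :=
  if SoftStable 𝔽 X then TW (progSat 𝔽 X) else .zero

open Classical in
/-- `W^pnt_𝔽(X) = TW(𝔽 \ 𝔽_X)⁻¹` if `X ∈ SM[𝔽]`, and zero otherwise. -/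
noncomputable def Wpnt (𝔽 : Program P) (X : Finset P) : WExpr :=
  if SoftStable 𝔽 X then (TW (𝔽 \ progSat 𝔽 X)).inv else .zero

/-- `P_𝔽(X)`: the limit as `a → ∞` of the normalized evaluation of `W_𝔽(X)`. -/
noncomputable def Pr [Fintype P] (𝔽 : Program P) (X : Finset P) : ℝ :=
  Filter.limUnder Filter.atTop
    (fun a : ℝ => (W 𝔽 X).eval a / ∑ Y : Finset P, (W 𝔽 Y).eval a)

/-- `P^pnt_𝔽(X)`: the limit as `a → ∞` of the normalized evaluation of `W^pnt_𝔽(X)`. -/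
noncomputable def PrPnt [Fintype P] (𝔽 : Program P) (X : Finset P) : ℝ :=
  Filter.limUnder Filter.atTop
    (fun a : ℝ => (Wpnt 𝔽 X).eval a / ∑ Y : Finset P, (Wpnt 𝔽 Y).eval a)

/-- Weak equivalence: the same probability distribution. -/
def WeakEquiv [Fintype P] (𝔽 𝔾 : Program P) : Prop :=
  ∀ X : Finset P, Pr 𝔽 X = Pr 𝔾 X

/-- Strong equivalence of LP^MLN programs. -/
def StrongEquiv [Fintype P] (𝔽 𝔾 : Program P) : Prop :=
  ∀ (ℍ : Program P) (X : Finset P), Pr (𝔽 ∪ ℍ) X = Pr (𝔾 ∪ ℍ) X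

/-- Structural equivalence of LP^MLN programs. -/
def StructEquiv (𝔽 𝔾 : Program P) : Prop :=
  ∀ (ℍ : Program P) (X : Finset P), SoftStable (𝔽 ∪ ℍ) X ↔ SoftStable (𝔾 ∪ ℍ) X

/-- HT satisfaction `⟨Y,X⟩ ⊨ₕₜ F` (at the world "here"). -/
def htSat (Y X : Finset P) : Formula P → Prop
  | .atom p => p ∈ Y
  | .bot => False
  | .and F G => htSat Y X F ∧ htSat Y X G
  | .or F G => htSat Y X F ∨ htSat Y X G
  | .imp F G => (htSat Y X F → htSat Y X G) ∧ (Formula.imp F G).sat X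

/-- `⟨Y,X⟩` is an HT model of a set `Γ` of formulas. -/
def HTModel (Γ : Finset (Formula P)) (Y X : Finset P) : Prop :=
  Y ⊆ X ∧ ∀ F ∈ Γ, htSat Y X F

/-- `⟨Y,X⟩` is a soft HT model of an LP^MLN program `𝔽`. -/
def SoftHT (𝔽 : Program P) (Y X : Finset P) : Prop :=
  Y ⊆ X ∧ ∀ r ∈ progSat 𝔽 X, htSat Y X r.2

/-- The choice formula `{F}^ch = F ∨ ¬F`. -/
def Formula.ch (F : Formula P) : Formula P := .or F F.neg

/-- `{Γ}^ch`, choice formulas of a set of formulas. -/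
def chSet (Γ : Finset (Formula P)) : Finset (Formula P) := Γ.image Formula.ch

/-- Renaming of atoms. -/
def Formula.rename {Q : Type} (f : P → Q) : Formula P → Formula Q
  | .atom p => .atom (f p)
  | .bot => .bot
  | .and F G => .and (F.rename f) (G.rename f)
  | .or F G => .or (F.rename f) (G.rename f)
  | .imp F G => .imp (F.rename f) (G.rename f)

/-- `Δ_{𝒫'}(F)`, a formula over `𝒫 ∪ 𝒫'`; unprimed atoms are `Sum.inl p`,
primed atoms `p'` are `Sum.inr p`. -/
def Formula.delta : Formula P → Formula (P ⊕ P)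
  | .atom p => .atom (Sum.inr p)
  | .bot => .bot
  | .and F G => .and F.delta G.delta
  | .or F G => .or F.delta G.delta
  | .imp F G => .and (.imp F.delta G.delta)
      (.imp (F.rename Sum.inl) (G.rename Sum.inl))

/-- `Δ_{𝒫'}(Γ)` for a set of formulas. -/
def deltaSet (Γ : Finset (Formula P)) : Finset (Formula (P ⊕ P)) :=
  Γ.image Formula.delta

/-- The interpretation `Y' ∪ X` of `𝒫 ∪ 𝒫'`. -/
def primedInterp (Y X : Finset P) : Finset (P ⊕ P) :=
  X.image Sum.inl ∪ Y.image Sum.inr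

/-!
Since `𝔽_X` and `𝔽 \ 𝔽_X` partition `𝔽`, we have `TW(𝔽) = TW(𝔽_X) · TW(𝔽 \ 𝔽_X)`, so
`W^pnt_𝔽(X) = W_𝔽(X) · TW(𝔽)⁻¹` for every `X`. The penalty-based weights thus differ from the
reward-based ones by a factor independent of `X`, which cancels on normalization.
-/

namespace WExpr

lemma eval_mul (a : ℝ) : ∀ e f : WExpr, (e.mul f).eval a = e.eval a * f.eval a
  | .zero, _ => by simp only [mul, eval, zero_mul]
  | .exp _ _, .zero => by simp only [mul, eval, mul_zero]
  | .exp c₁ c₂, .exp d₁ d₂ => by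
    simp only [mul, eval, ← Real.exp_add, Int.cast_add]
    ring_nf

end WExpr

lemma softSum_add_sdiff {𝔾 𝔽 : Program P} (h : 𝔾 ⊆ 𝔽) :
    softSum 𝔾 + softSum (𝔽 \ 𝔾) = softSum 𝔽 := by
  rw [add_comm]
  exact Finset.sum_sdiff h

lemma hardCount_add_sdiff {𝔾 𝔽 : Program P} (h : 𝔾 ⊆ 𝔽) :
    hardCount 𝔾 + hardCount (𝔽 \ 𝔾) = hardCount 𝔽 := by
  simp only [hardCount, Finset.card_filter, Nat.cast_sum]
  rw [add_comm]
  exact Finset.sum_sdiff h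

lemma TW_inv_sdiff {𝔾 𝔽 : Program P} (h : 𝔾 ⊆ 𝔽) :
    (TW (𝔽 \ 𝔾)).inv = (TW 𝔾).mul (TW 𝔽).inv := by
  simp only [TW, WExpr.inv, WExpr.mul, ← softSum_add_sdiff h, ← hardCount_add_sdiff h]
  congr 1 <;> ring

lemma Wpnt_eq_mul_inv_TW (𝔽 : Program P) (X : Finset P) :
    Wpnt 𝔽 X = (W 𝔽 X).mul (TW 𝔽).inv := by
  unfold Wpnt W
  split_ifs
  · exact TW_inv_sdiff (Finset.filter_subset _ _)
  · rfl

lemma div_sum_mul_right {ι 𝕜 : Type*} [Fintype ι] [DivisionRing 𝕜] (f : ι → 𝕜) (i : ι)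
    {c : 𝕜} (hc : c ≠ 0) : f i * c / ∑ j, f j * c = f i / ∑ j, f j := by
  rw [← Finset.sum_mul, mul_div_mul_right _ _ hc]

/-- the normalized evaluations of `W` and `W^pnt` agree pointwise,
and consequently `P_𝔽(X) = P^pnt_𝔽(X)`. -/
theorem stmt1 {P : Type} [DecidableEq P] [Fintype P] (𝔽 : Program P) (X : Finset P) :
    (∀ a : ℝ,
      (W 𝔽 X).eval a / ∑ Y : Finset P, (W 𝔽 Y).eval a =
      (Wpnt 𝔽 X).eval a / ∑ Y : Finset P, (Wpnt 𝔽 Y).eval a) ∧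
    Pr 𝔽 X = PrPnt 𝔽 X := by
  have normalized_eq (a : ℝ) :
      (W 𝔽 X).eval a / ∑ Y : Finset P, (W 𝔽 Y).eval a =
      (Wpnt 𝔽 X).eval a / ∑ Y : Finset P, (Wpnt 𝔽 Y).eval a := by
    simp only [Wpnt_eq_mul_inv_TW, WExpr.eval_mul]
    exact (div_sum_mul_right (fun Y => (W 𝔽 Y).eval a) X (Real.exp_ne_zero _)).symm
  exact ⟨normalized_eq, congrArg (Filter.limUnder Filter.atTop) (funext normalized_eq)⟩

end LPMLN
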